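/- Let X be a d-dimensional shift and Z a maximal subsystem of X. If Z ∩ cl(X \ Z) = ∅, then cl(X \ Z) is a minimal shift. Otherwise, cl(X \ Z) is a transitive shift of maximality type 1 (it has exactly one maximal subsystem). -/
import Mathlib


/-- The group `ℤ^d`. -/
abbrev ZD (d : ℕ) := Fin d → ℤ

/-- A configuration is a map `ℤ^d → ℤ`. -/
abbrev Config (d : ℕ) := ZD d → ℤ

/-- The shift map `σ^u`, defined by `σ^u(x)_v = x_{u+v}`. -/
def shiftMap {d : ℕ} (u : ZD d) (x : Config d) : Config d := fun v => x (u + v)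

/-- The sup norm `‖·‖_∞` on `ℤ^d`, valued in `ℕ`. -/
def normInf {d : ℕ} (n : ZD d) : ℕ := Finset.univ.sup fun i => (n i).natAbs

open Classical in
/-- The metric `δ` on configurations: `δ(x,y) = 2^{-min{‖n‖_∞ : x_n ≠ y_n}}`, `δ(x,x) = 0`. -/
noncomputable def deltaDist {d : ℕ} (x y : Config d) : ℝ :=
  if x = y then 0
  else (2 : ℝ) ^ (-((sInf {m : ℕ | ∃ n : ZD d, normInf n = m ∧ x n ≠ y n} : ℕ) : ℤ))

/-- The closure of a set of configurations with respect to the metric `δ`. -/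
def deltaClosure {d : ℕ} (A : Set (Config d)) : Set (Config d) :=
  {x | ∀ ε : ℝ, 0 < ε → ∃ a ∈ A, deltaDist x a < ε}

/-- A set of configurations is closed for `δ` when it contains all its limit points. -/
def IsDeltaClosed {d : ℕ} (A : Set (Config d)) : Prop := deltaClosure A ⊆ A

/-- A `d`-dimensional shift: a nonempty set of configurations over a common finite
alphabet, closed for `δ` and invariant under every shift map. -/
def IsShift {d : ℕ} (X : Set (Config d)) : Prop :=
  X.Nonempty ∧ (∃ A : Finset ℤ, ∀ x ∈ X, ∀ v : ZD d, x v ∈ A) ∧ IsDeltaClosed X ∧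
    ∀ u : ZD d, ∀ x ∈ X, shiftMap u x ∈ X

/-- The Hausdorff metric `δ_H` on the space of shifts. -/
noncomputable def deltaH {d : ℕ} (X Z : Set (Config d)) : ℝ :=
  max (⨆ x : X, ⨅ z : Z, deltaDist (x : Config d) (z : Config d))
      (⨆ z : Z, ⨅ x : X, deltaDist (x : Config d) (z : Config d))

/-- A subsystem of a shift `X`: a nonempty closed shift-invariant subset of `X`. -/
def IsSubsystem {d : ℕ} (Z X : Set (Config d)) : Prop :=
  Z.Nonempty ∧ Z ⊆ X ∧ IsDeltaClosed Z ∧ ∀ u : ZD d, ∀ z ∈ Z, shiftMap u z ∈ Z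

/-- A maximal subsystem of `X`: a proper subsystem such that any subsystem strictly
between it and `X` equals `X`. -/
def IsMaximalSubsystem {d : ℕ} (Z X : Set (Config d)) : Prop :=
  IsSubsystem Z X ∧ Z ≠ X ∧ ∀ Z', IsSubsystem Z' X → Z ⊂ Z' → Z' = X

/-- An outcast of `X`: a proper subsystem contained in no maximal subsystem of `X`. -/
def IsOutcast {d : ℕ} (Z X : Set (Config d)) : Prop :=
  IsSubsystem Z X ∧ Z ≠ X ∧ ∀ M, IsMaximalSubsystem M X → ¬ Z ⊆ M

/-- A pattern with finite support `U` (given by the values of `p` on `U`) appears in the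
configuration `x`. -/
def PatternAppears {d : ℕ} (U : Finset (ZD d)) (p : ZD d → ℤ) (x : Config d) : Prop :=
  ∃ u : ZD d, ∀ v ∈ U, x (u + v) = p v

/-- The set of configurations over the alphabet `A` avoiding every pattern in `F`. -/
def XofF {d : ℕ} (A : Finset ℤ) (F : Set (Finset (ZD d) × (ZD d → ℤ))) : Set (Config d) :=
  {x | (∀ v : ZD d, x v ∈ A) ∧ ∀ q ∈ F, ¬ PatternAppears q.1 q.2 x}

/-- A shift of finite type: defined by a finite alphabet and a finite set of forbidden
patterns. -/
def IsSFT {d : ℕ} (X : Set (Config d)) : Prop :=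
  ∃ (A : Finset ℤ) (F : Finset (Finset (ZD d) × (ZD d → ℤ))), X = XofF A (F : Set _)

/-- `X` is an isolated point of the subspace `S` (with the Hausdorff metric `δ_H`). -/
def IsolatedIn {d : ℕ} (S : Set (Set (Config d))) (X : Set (Config d)) : Prop :=
  X ∈ S ∧ ∃ ε : ℝ, 0 < ε ∧ ∀ Z ∈ S, deltaH X Z < ε → Z = X

/-- The orbit of a configuration under the shift action. -/
def orbit {d : ℕ} (x : Config d) : Set (Config d) := {y | ∃ u : ZD d, y = shiftMap u x}

/-- A shift is transitive when some point has dense orbit. -/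
def IsTransitive {d : ℕ} (X : Set (Config d)) : Prop :=
  IsShift X ∧ ∃ x ∈ X, X ⊆ deltaClosure (orbit x)

/-- A shift is minimal when its only subsystem is itself. -/
def IsMinimalShift {d : ℕ} (X : Set (Config d)) : Prop :=
  IsShift X ∧ ∀ Z, IsSubsystem Z X → Z = X

lemma deltaDist_self {d : ℕ} (x : Config d) : deltaDist x x = 0 := by simp [deltaDist]

lemma deltaDist_nonneg {d : ℕ} (x y : Config d) : 0 ≤ deltaDist x y := by
  unfold deltaDist; split
  · exact le_refl _
  · positivity

lemma diffSet_nonempty {d : ℕ} {x y : Config d} (h : x ≠ y) :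
    {m : ℕ | ∃ n : ZD d, normInf n = m ∧ x n ≠ y n}.Nonempty := by
  obtain ⟨n, hn⟩ := Function.ne_iff.mp h
  exact ⟨normInf n, n, rfl, hn⟩

lemma deltaDist_eq {d : ℕ} {x y : Config d} (h : x ≠ y) :
    deltaDist x y = (2:ℝ) ^ (-((sInf {m : ℕ | ∃ n : ZD d, normInf n = m ∧ x n ≠ y n} : ℕ) : ℤ)) := by
  unfold deltaDist; rw [if_neg h]

lemma two_zpow_anti {a b : ℕ} (h : a ≤ b) : (2:ℝ) ^ (-(b:ℤ)) ≤ (2:ℝ) ^ (-(a:ℤ)) := by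
  apply zpow_le_zpow_right₀ one_le_two
  omega

lemma deltaDist_ultra {d : ℕ} (x y z : Config d) :
    deltaDist x z ≤ max (deltaDist x y) (deltaDist y z) := by
  by_cases hxz : x = z
  · rw [hxz, deltaDist_self]
    exact le_max_of_le_left (deltaDist_nonneg _ _)
  obtain ⟨n, hn, hne⟩ := Nat.sInf_mem (diffSet_nonempty hxz)
  by_cases hxy : x n = y n
  · have hyzn : y n ≠ z n := fun h => hne (hxy.trans h)
    have hyz : y ≠ z := fun h => hyzn (by rw [h])
    refine le_max_of_le_right ?_
    rw [deltaDist_eq hxz, deltaDist_eq hyz]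
    apply two_zpow_anti
    rw [← hn]
    exact Nat.sInf_le ⟨n, rfl, hyzn⟩
  · have hxy' : x ≠ y := fun h => hxy (by rw [h])
    refine le_max_of_le_left ?_
    rw [deltaDist_eq hxz, deltaDist_eq hxy']
    apply two_zpow_anti
    rw [← hn]
    exact Nat.sInf_le ⟨n, rfl, hxy⟩

lemma subset_deltaClosure {d : ℕ} {A : Set (Config d)} : A ⊆ deltaClosure A :=
  fun a ha ε hε => ⟨a, ha, by rw [deltaDist_self]; exact hε⟩

lemma deltaClosure_mono {d : ℕ} {A B : Set (Config d)} (h : A ⊆ B) :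
    deltaClosure A ⊆ deltaClosure B := by
  intro x hx ε hε
  obtain ⟨a, ha, hd⟩ := hx ε hε
  exact ⟨a, h ha, hd⟩

lemma isDeltaClosed_deltaClosure {d : ℕ} (A : Set (Config d)) :
    IsDeltaClosed (deltaClosure A) := by
  intro x hx ε hε
  obtain ⟨y, hy, hxy⟩ := hx ε hε
  obtain ⟨a, ha, hya⟩ := hy ε hε
  exact ⟨a, ha, lt_of_le_of_lt (deltaDist_ultra x y a) (max_lt hxy hya)⟩

lemma deltaClosure_union {d : ℕ} {A B : Set (Config d)} :
    deltaClosure (A ∪ B) ⊆ deltaClosure A ∪ deltaClosure B := by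
  intro x hx
  by_cases h1 : x ∈ deltaClosure A
  · exact Or.inl h1
  by_cases h2 : x ∈ deltaClosure B
  · exact Or.inr h2
  exfalso
  simp only [deltaClosure, Set.mem_setOf_eq] at h1 h2
  push_neg at h1 h2
  obtain ⟨ε1, hε1, hA⟩ := h1
  obtain ⟨ε2, hε2, hB⟩ := h2
  obtain ⟨a, ha, hd⟩ := hx (min ε1 ε2) (lt_min hε1 hε2)
  rcases ha with ha | ha
  · exact absurd hd (not_lt.mpr (le_trans (min_le_left _ _) (hA a ha)))
  · exact absurd hd (not_lt.mpr (le_trans (min_le_right _ _) (hB a ha)))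

lemma normInf_add_le {d : ℕ} (u n : ZD d) : normInf (u + n) ≤ normInf u + normInf n := by
  unfold normInf
  apply Finset.sup_le
  intro i _
  calc ((u + n) i).natAbs = (u i + n i).natAbs := rfl
    _ ≤ (u i).natAbs + (n i).natAbs := Int.natAbs_add_le _ _
    _ ≤ _ := add_le_add (Finset.le_sup (f := fun i => (u i).natAbs) (Finset.mem_univ i)) (Finset.le_sup (f := fun i => (n i).natAbs) (Finset.mem_univ i))

lemma deltaDist_shift_le {d : ℕ} (u : ZD d) (x y : Config d) :
    deltaDist (shiftMap u x) (shiftMap u y) ≤ 2 ^ (normInf u : ℤ) * deltaDist x y := by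
  by_cases hs : shiftMap u x = shiftMap u y
  · rw [hs, deltaDist_self]
    exact mul_nonneg (by positivity) (deltaDist_nonneg _ _)
  have hxy : x ≠ y := fun h => hs (by rw [h])
  obtain ⟨n, hn, hne⟩ := Nat.sInf_mem (diffSet_nonempty hs)
  have hne' : x (u + n) ≠ y (u + n) := hne
  have hmem : normInf (u + n) ∈ {m : ℕ | ∃ n : ZD d, normInf n = m ∧ x n ≠ y n} :=
    ⟨u + n, rfl, hne'⟩
  have h1 : sInf {m : ℕ | ∃ n : ZD d, normInf n = m ∧ x n ≠ y n} ≤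
      normInf u + sInf {m : ℕ | ∃ n' : ZD d, normInf n' = m ∧ shiftMap u x n' ≠ shiftMap u y n'} := by
    refine le_trans (Nat.sInf_le hmem) ?_
    rw [← hn]
    exact normInf_add_le u n
  rw [deltaDist_eq hs, deltaDist_eq hxy, ← zpow_add₀ (two_ne_zero (α := ℝ))]
  apply zpow_le_zpow_right₀ one_le_two
  omega

lemma shiftMap_shiftMap {d : ℕ} (u w : ZD d) (x : Config d) :
    shiftMap u (shiftMap w x) = shiftMap (w + u) x := by
  funext v
  simp [shiftMap, add_assoc]

lemma shiftMap_zero {d : ℕ} (x : Config d) : shiftMap 0 x = x := by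
  funext v
  simp [shiftMap]

lemma shiftMap_neg_shiftMap {d : ℕ} (u : ZD d) (x : Config d) :
    shiftMap (-u) (shiftMap u x) = x := by
  rw [shiftMap_shiftMap, add_neg_cancel, shiftMap_zero]

lemma deltaClosure_invariant {d : ℕ} {A : Set (Config d)}
    (hA : ∀ u : ZD d, ∀ a ∈ A, shiftMap u a ∈ A) (u : ZD d) {x : Config d}
    (hx : x ∈ deltaClosure A) : shiftMap u x ∈ deltaClosure A := by
  intro ε hε
  have h2 : (0:ℝ) < 2 ^ (normInf u : ℤ) := by positivity
  obtain ⟨a, ha, hda⟩ := hx (ε / 2 ^ (normInf u : ℤ)) (by positivity)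
  refine ⟨shiftMap u a, hA u a ha, ?_⟩
  calc deltaDist (shiftMap u x) (shiftMap u a) ≤ 2 ^ (normInf u : ℤ) * deltaDist x a :=
        deltaDist_shift_le u x a
    _ < 2 ^ (normInf u : ℤ) * (ε / 2 ^ (normInf u : ℤ)) := by
        exact mul_lt_mul_of_pos_left hda h2
    _ = ε := by field_simp

/-- Let `Z` be a maximal subsystem of a shift `X`. If
`Z ∩ cl(X \ Z) = ∅` then `cl(X \ Z)` is minimal; otherwise `cl(X \ Z)` is a transitive
shift with exactly one maximal subsystem. -/
theorem closure_of_complement_of_maximal_subsystem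
    (d : ℕ) (hd : 1 ≤ d) (X Z : Set (Config d)) (hX : IsShift X)
    (hZ : IsMaximalSubsystem Z X) :
    (Z ∩ deltaClosure (X \ Z) = ∅ → IsMinimalShift (deltaClosure (X \ Z))) ∧
    (Z ∩ deltaClosure (X \ Z) ≠ ∅ →
      IsTransitive (deltaClosure (X \ Z)) ∧
      ∃! M : Set (Config d), IsMaximalSubsystem M (deltaClosure (X \ Z))) := by
  obtain ⟨hXne, ⟨Alph, hAlph⟩, hXcl, hXinv⟩ := hX
  obtain ⟨⟨hZne, hZsub, hZcl, hZinv⟩, hZneX, hZmax⟩ := hZ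
  set Y := deltaClosure (X \ Z) with hY
  obtain ⟨x0, hx0X, hx0Z⟩ : ∃ x0, x0 ∈ X ∧ x0 ∉ Z := by
    by_contra h
    push_neg at h
    exact hZneX (Set.Subset.antisymm hZsub h)
  have hx0XZ : x0 ∈ X \ Z := ⟨hx0X, hx0Z⟩
  have hXZinv : ∀ u : ZD d, ∀ x ∈ X \ Z, shiftMap u x ∈ X \ Z := by
    intro u x hx
    refine ⟨hXinv u x hx.1, fun hmem => hx.2 ?_⟩
    have := hZinv (-u) _ hmem
    rwa [shiftMap_neg_shiftMap] at this
  have hYinv : ∀ u : ZD d, ∀ y ∈ Y, shiftMap u y ∈ Y := fun u y hy =>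
    deltaClosure_invariant hXZinv u hy
  have hYsubX : Y ⊆ X := fun y hy => hXcl (deltaClosure_mono Set.diff_subset hy)
  have hx0Y : x0 ∈ Y := subset_deltaClosure hx0XZ
  have hYcl : IsDeltaClosed Y := isDeltaClosed_deltaClosure _
  have hYshift : IsShift Y :=
    ⟨⟨x0, hx0Y⟩, ⟨Alph, fun y hy v => hAlph y (hYsubX hy) v⟩, hYcl, hYinv⟩
  have key : ∀ W, IsSubsystem W X → (∃ w ∈ W, w ∉ Z) → Y ⊆ W := by
    rintro W ⟨hWne, hWsub, hWcl, hWinv⟩ ⟨w, hwW, hwZ⟩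
    have hsub : IsSubsystem (Z ∪ W) X := by
      refine ⟨hZne.mono Set.subset_union_left, Set.union_subset hZsub hWsub, ?_, ?_⟩
      · intro x hx
        rcases deltaClosure_union hx with h | h
        · exact Or.inl (hZcl h)
        · exact Or.inr (hWcl h)
      · rintro u x (hx | hx)
        · exact Or.inl (hZinv u x hx)
        · exact Or.inr (hWinv u x hx)
    have hss : Z ⊂ Z ∪ W :=
      (Set.ssubset_iff_of_subset Set.subset_union_left).mpr ⟨w, Or.inr hwW, hwZ⟩
    have hEq := hZmax _ hsub hss
    have hdiff : X \ Z ⊆ W := by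
      intro x hx
      have hx' : x ∈ Z ∪ W := hEq ▸ hx.1
      rcases hx' with h | h
      · exact absurd h hx.2
      · exact h
    exact fun y hy => hWcl (deltaClosure_mono hdiff hy)
  constructor
  · intro hdisj
    refine ⟨hYshift, fun W hW => ?_⟩
    obtain ⟨w, hwW⟩ := hW.1
    have hwY : w ∈ Y := hW.2.1 hwW
    have hwZ : w ∉ Z := fun hz => Set.eq_empty_iff_forall_notMem.mp hdisj w ⟨hz, hwY⟩
    have hWX : IsSubsystem W X := ⟨hW.1, hW.2.1.trans hYsubX, hW.2.2.1, hW.2.2.2⟩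
    exact Set.Subset.antisymm hW.2.1 (key W hWX ⟨w, hwW, hwZ⟩)
  · intro hne
    constructor
    · refine ⟨hYshift, x0, hx0Y, ?_⟩
      have horbsub : orbit x0 ⊆ X := by
        rintro y ⟨u, rfl⟩; exact hXinv u x0 hx0X
      have horbinv : ∀ u : ZD d, ∀ a ∈ orbit x0, shiftMap u a ∈ orbit x0 := by
        rintro u a ⟨w, rfl⟩
        exact ⟨w + u, shiftMap_shiftMap u w x0⟩
      have hx0orb : x0 ∈ deltaClosure (orbit x0) :=
        subset_deltaClosure ⟨0, (shiftMap_zero x0).symm⟩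
      have hCsub : IsSubsystem (deltaClosure (orbit x0)) X :=
        ⟨⟨x0, hx0orb⟩, fun y hy => hXcl (deltaClosure_mono horbsub hy),
          isDeltaClosed_deltaClosure _,
          fun u a ha => deltaClosure_invariant horbinv u ha⟩
      exact key _ hCsub ⟨x0, hx0orb, hx0Z⟩
    · have hMsub : IsSubsystem (Z ∩ Y) Y := by
        refine ⟨Set.nonempty_iff_ne_empty.mpr hne, Set.inter_subset_right, ?_, ?_⟩
        · intro x hx
          exact ⟨hZcl (deltaClosure_mono Set.inter_subset_left hx),
                 hYcl (deltaClosure_mono Set.inter_subset_right hx)⟩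
        · intro u z hz
          exact ⟨hZinv u z hz.1, hYinv u z hz.2⟩
      have hMneY : Z ∩ Y ≠ Y := fun h => hx0Z ((h.ge hx0Y).1)
      have hMmax : IsMaximalSubsystem (Z ∩ Y) Y := by
        refine ⟨hMsub, hMneY, fun W hW hss => ?_⟩
        obtain ⟨w, hwW, hwM⟩ := Set.exists_of_ssubset hss
        have hwY : w ∈ Y := hW.2.1 hwW
        have hwZ : w ∉ Z := fun hz => hwM ⟨hz, hwY⟩
        have hWX : IsSubsystem W X := ⟨hW.1, hW.2.1.trans hYsubX, hW.2.2.1, hW.2.2.2⟩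
        exact Set.Subset.antisymm hW.2.1 (key W hWX ⟨w, hwW, hwZ⟩)
      refine ⟨Z ∩ Y, hMmax, ?_⟩
      intro M' hM'
      have hM'Z : M' ⊆ Z := by
        by_contra h
        obtain ⟨w, hwM, hwZ⟩ := Set.not_subset.mp h
        have hWX : IsSubsystem M' X :=
          ⟨hM'.1.1, hM'.1.2.1.trans hYsubX, hM'.1.2.2.1, hM'.1.2.2.2⟩
        exact hM'.2.1 (Set.Subset.antisymm hM'.1.2.1 (key M' hWX ⟨w, hwM, hwZ⟩))
      have hM'sub : M' ⊆ Z ∩ Y := fun m hm => ⟨hM'Z hm, hM'.1.2.1 hm⟩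
      by_cases h : M' = Z ∩ Y
      · exact h
      · exact absurd (hM'.2.2 _ hMsub (hM'sub.ssubset_of_ne h)) hMneY
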